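/- For injections g : [k] → [n] and the associated injection f_g : [2k] → [2n] defined by f_g(2i-1) = g(i), f_g(2i) = n + g(i), the number of inversions of f_g is even-plus-constant: inv(f_g) ≡ k(k-1)/2 (mod 2). Equivalently, (-1)^{inv(f_g)} = (-1)^{k(k-1)/2} independently of g. -/

import Mathlib

/-!
Split `[2k]` into the blocks `{2i, 2i+1}`, carrying the values `g i < n + g i`. A block forms
no inversion by itself, and two blocks `i < j` form `1 + 2 [g j < g i]` inversions, an odd
number whatever `g` is. Hence `inv(f_g) ≡ #{i < j} = k(k-1)/2 (mod 2)`.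
-/

open Finset

/-- `fgRel g f` says `f` is the interleaved injection `f_g : [2k] → [2n]` with
`f(2i-1) = g(i)` and `f(2i) = n + g(i)` (1-based; here 0-based indexing). -/
def fgRel (k n : ℕ) (g : Fin k ↪ Fin n) (f : Fin (2 * k) → Fin (2 * n)) : Prop :=
  ∀ i : Fin k,
    f ⟨2 * (i : ℕ), by have := i.isLt; omega⟩ =
      ⟨(g i : ℕ), by have := (g i).isLt; omega⟩ ∧
    f ⟨2 * (i : ℕ) + 1, by have := i.isLt; omega⟩ =
      ⟨n + (g i : ℕ), by have := (g i).isLt; omega⟩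

def inversions {α : Type*} [LinearOrder α] {m : ℕ} (f : Fin m → α) :
    Finset (Fin m × Fin m) :=
  univ.filter fun p => p.1 < p.2 ∧ f p.2 < f p.1

theorem natCast_card_inversions_eq_sum {α κ R : Type*} [LinearOrder α] [Fintype κ]
    [AddCommMonoidWithOne R] {m : ℕ} (e : κ ≃ Fin m) (f : Fin m → α) :
    ((inversions f).card : R) =
      ∑ x : κ, ∑ y : κ, if e x < e y ∧ f (e y) < f (e x) then 1 else 0 := by
  rw [inversions, natCast_card_filter, ← Fintype.sum_prod_type']
  exact (Fintype.sum_equiv (e.prodCongr e) _ _ fun _ => rfl).symm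

def interleave (k : ℕ) : Fin k × Fin 2 ≃ Fin (2 * k) :=
  finProdFinEquiv.trans (finCongr (Nat.mul_comm k 2))

@[simp]
theorem val_interleave {k : ℕ} (p : Fin k × Fin 2) : (interleave k p : ℕ) = p.2 + 2 * p.1 := by
  simp [interleave]

theorem fgRel.val_apply_interleave {k n : ℕ} {g : Fin k ↪ Fin n}
    {f : Fin (2 * k) → Fin (2 * n)} (hf : fgRel k n g f) (i : Fin k) (s : Fin 2) :
    (f (interleave k (i, s)) : ℕ) = n * s + g i := by
  fin_cases s
  · have : interleave k (i, 0) = ⟨2 * (i : ℕ), by omega⟩ := by ext; simp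
    simp [this, (hf i).1]
  · have : interleave k (i, 1) = ⟨2 * (i : ℕ) + 1, by omega⟩ := by
      ext; simp only [val_interleave, Fin.val_one]; omega
    simp [this, (hf i).2]

/-- For `i < j`, the blocks `(u, n + u)` at positions `2i, 2i+1` and `(v, n + v)` at
positions `2j, 2j+1` form `1 + 2 [v < u]` inversions; a block alone forms none. -/
theorem sum_block_inversions_eq (n i j u v : ℕ) (hu : u < n) (hv : v < n) :
    (∑ s : Fin 2, ∑ t : Fin 2,
      if s + 2 * i < t + 2 * j ∧ n * t + v < n * s + u then (1 : ZMod 2) else 0) =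
      if i < j then 1 else 0 := by
  simp only [Fin.sum_univ_two, Fin.val_zero, Fin.val_one]
  split_ifs <;> first | rfl | omega

theorem fgRel.natCast_card_inversions {k n : ℕ} {g : Fin k ↪ Fin n}
    {f : Fin (2 * k) → Fin (2 * n)} (hf : fgRel k n g f) :
    ((inversions f).card : ZMod 2) = (k.choose 2 : ℕ) := by
  calc ((inversions f).card : ZMod 2)
      = ∑ i : Fin k, ∑ j : Fin k, ∑ s : Fin 2, ∑ t : Fin 2,
          if interleave k (i, s) < interleave k (j, t) ∧
            f (interleave k (j, t)) < f (interleave k (i, s)) then 1 else 0 := by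
        simp only [natCast_card_inversions_eq_sum (interleave k), Fintype.sum_prod_type]
        exact sum_congr rfl fun i _ => sum_comm
    _ = ∑ i : Fin k, ∑ j : Fin k, if i < j then 1 else 0 := by
        refine sum_congr rfl fun i _ => sum_congr rfl fun j _ => ?_
        simp only [Fin.lt_def, val_interleave, hf.val_apply_interleave]
        exact sum_block_inversions_eq n i j (g i) (g j) (g i).isLt (g j).isLt
    _ = (#{p : Fin k × Fin k | p.1 < p.2} : ℕ) := by
        rw [natCast_card_filter, Fintype.sum_prod_type]
    _ = (k.choose 2 : ℕ) := by
        rw [Fintype.card_product_filter_lt, Fintype.card_fin]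

/-- For every injection `g : [k] → [n]`, the interleaved injection `f_g` satisfies
`(-1)^{inv(f_g)} = (-1)^{k(k-1)/2}`, i.e. `inv(f_g) ≡ k(k-1)/2 (mod 2)`,
independently of `g`. -/
theorem interleaved_injection_inversion_parity (k n : ℕ) (g : Fin k ↪ Fin n)
    (f : Fin (2 * k) → Fin (2 * n)) (hf : fgRel k n g f) :
    (-1 : ℤ) ^ ((univ.filter fun p : Fin (2 * k) × Fin (2 * k) =>
        p.1 < p.2 ∧ f p.2 < f p.1).card) = (-1 : ℤ) ^ (k * (k - 1) / 2) ∧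
    ((univ.filter fun p : Fin (2 * k) × Fin (2 * k) =>
        p.1 < p.2 ∧ f p.2 < f p.1).card) % 2 = (k * (k - 1) / 2) % 2 := by
  change (-1 : ℤ) ^ (inversions f).card = _ ∧ (inversions f).card % 2 = _
  have hmod : (inversions f).card % 2 = k * (k - 1) / 2 % 2 := by
    rw [← Nat.choose_two_right]
    exact (ZMod.natCast_eq_natCast_iff' _ _ _).1 hf.natCast_card_inversions
  exact ⟨by rw [neg_one_pow_eq_pow_mod_two, hmod, ← neg_one_pow_eq_pow_mod_two], hmod⟩
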